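/- arXiv:2004.00324 — 2 statements merged into one kernel-verified Lean document; each statement's English description precedes it below -/
import Mathlib

section
/- Assume f is (L₁,L₂,L₃)-Lipschitz on D_M, i.e. |f(x,u₂,v₂,w₂) − f(x,u₁,v₁,w₁)| ≤ L₁|u₂−u₁| + L₂|v₂−v₁| + L₃|w₂−w₁| on D_M. Let φ₁, φ₂ ∈ C(Ω̄) with ‖φ₁‖ ≤ M and ‖φ₂‖ ≤ M, and for i = 1, 2 let uᵢ be a classical solution of Δ³uᵢ = φᵢ in Ω with uᵢ = Δuᵢ = Δ²uᵢ = 0 on Γ. Then max_{x∈Ω̄} |f(x,u₂,Δu₂,Δ²u₂) − f(x,u₁,Δu₁,Δ²u₁)| ≤ q·‖φ₂ − φ₁‖, where q = (C_Ω²L₁ + C_ΩL₂ + L₃)·C_Ω. -/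
open scoped BigOperators

/-- The Laplace operator on `ℝⁿ` (realized as `EuclideanSpace ℝ (Fin n)`):
`Δ f x = ∑ i ∂²f/∂xᵢ² (x)`. -/
noncomputable def lap {n : ℕ} (f : EuclideanSpace ℝ (Fin n) → ℝ)
    (x : EuclideanSpace ℝ (Fin n)) : ℝ :=
  ∑ i : Fin n, fderiv ℝ (fun y => fderiv ℝ f y (EuclideanSpace.single i 1)) x
    (EuclideanSpace.single i 1)

/-- `max_{x ∈ S} |y x|` (as a supremum). -/
noncomputable def supNorm {α : Type*} (S : Set α) (y : α → ℝ) : ℝ :=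
  sSup ((fun x => |y x|) '' S)

/-- `u` is a classical solution of the triharmonic problem `Δ³u = φ` in `Ω`,
`u = Δu = Δ²u = 0` on `Γ = ∂Ω`, with `u`, `Δu`, `Δ²u` continuous on `Ω̄`. -/
def IsClassicalTriharm {n : ℕ} (Ω : Set (EuclideanSpace ℝ (Fin n)))
    (u φ : EuclideanSpace ℝ (Fin n) → ℝ) : Prop :=
  ContinuousOn u (closure Ω) ∧ ContinuousOn (lap u) (closure Ω) ∧
  ContinuousOn (lap (lap u)) (closure Ω) ∧
  ContDiffOn ℝ 2 u Ω ∧ ContDiffOn ℝ 2 (lap u) Ω ∧ ContDiffOn ℝ 2 (lap (lap u)) Ω ∧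
  (∀ x ∈ Ω, lap (lap (lap u)) x = φ x) ∧
  (∀ x ∈ frontier Ω, u x = 0 ∧ lap u x = 0 ∧ lap (lap u) x = 0)

/-- `u` is a (classical) solution of problem (P):
`Δ³u = f(x, u, Δu, Δ²u)` in `Ω`, `u = Δu = Δ²u = 0` on `Γ = ∂Ω`. -/
def IsSolP {n : ℕ} (Ω : Set (EuclideanSpace ℝ (Fin n)))
    (f : EuclideanSpace ℝ (Fin n) → ℝ → ℝ → ℝ → ℝ)
    (u : EuclideanSpace ℝ (Fin n) → ℝ) : Prop :=
  IsClassicalTriharm Ω u (fun x => f x (u x) (lap u x) (lap (lap u) x))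

/-- `w` is a classical solution of the Poisson problem `Δw = φ` in `Ω`, `w = 0` on `∂Ω`. -/
def IsPoissonSol {n : ℕ} (Ω : Set (EuclideanSpace ℝ (Fin n)))
    (w φ : EuclideanSpace ℝ (Fin n) → ℝ) : Prop :=
  ContinuousOn w (closure Ω) ∧ ContDiffOn ℝ 2 w Ω ∧
  (∀ x ∈ Ω, lap w x = φ x) ∧ (∀ x ∈ frontier Ω, w x = 0)

/-!
Each of `w = Δ²(u₂ - u₁)`, `Δ(u₂ - u₁)`, `u₂ - u₁` solves a Dirichlet problem `Δw = ψ`, `w = 0`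
on `Γ`, whose right-hand side is the next function of the chain (and finally `φ₂ - φ₁`). By the
weak maximum principle, comparing `±w` with the paraboloid `N (R² - ‖x - c‖²) / (2n)` whose
Laplacian is `-N`, such a `w` satisfies `‖w‖ ≤ C_Ω ‖ψ‖`. Iterating three times bounds the three
arguments of `f` (and, with `ψ = φᵢ`, places them in `D_M`), so the Lipschitz condition gives
the estimate in `Ω`; on `Γ` both values of `f` coincide.
-/

open Filter Topology
open scoped RealInnerProductSpace

section SecondDerivative

theorem IsLocalMin.deriv_deriv_nonneg {f : ℝ → ℝ} {x₀ : ℝ} (h : IsLocalMin f x₀)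
    (hc : ContinuousAt f x₀) : 0 ≤ deriv (deriv f) x₀ := by
  by_contra! hneg
  have hmax : IsLocalMax f x₀ := isLocalMax_of_deriv_deriv_neg hneg h.deriv_eq_zero hc
  have hconst : f =ᶠ[𝓝 x₀] fun _ => f x₀ := by
    filter_upwards [h, hmax] with x hmin hmax using le_antisymm hmax hmin
  have : deriv (deriv f) x₀ = 0 := by
    rw [hconst.deriv.deriv_eq]
    simp
  exact hneg.ne this

variable {E : Type*} [NormedAddCommGroup E] [NormedSpace ℝ E]

theorem ContDiffAt.differentiableAt_fderiv_apply {f : E → ℝ} {x : E} (hf : ContDiffAt ℝ 2 f x)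
    (e : E) : DifferentiableAt ℝ (fun y => fderiv ℝ f y e) x :=
  ((hf.fderiv_right (m := 1) (by norm_num)).differentiableAt (by simp)).clm_apply
    (differentiableAt_const e)

theorem IsLocalMin.fderiv_fderiv_apply_nonneg {f : E → ℝ} {x₀ : E} (h : IsLocalMin f x₀)
    (hf : ContDiffAt ℝ 2 f x₀) (e : E) : 0 ≤ fderiv ℝ (fun y => fderiv ℝ f y e) x₀ e := by
  have hℓ : ∀ t : ℝ, HasDerivAt (fun s : ℝ => x₀ + s • e) e t := fun t => by
    simpa using ((hasDerivAt_id t).smul_const e).const_add x₀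
  have hℓ0 : Tendsto (fun s : ℝ => x₀ + s • e) (𝓝 0) (𝓝 x₀) := by
    simpa using (hℓ 0).continuousAt.tendsto
  have h₁ : deriv (fun s : ℝ => f (x₀ + s • e)) =ᶠ[𝓝 0]
      fun t => fderiv ℝ f (x₀ + t • e) e := by
    filter_upwards [hℓ0.eventually (hf.eventually (by simp))] with t ht
    exact ((ht.differentiableAt (by simp)).hasFDerivAt.comp_hasDerivAt t (hℓ t)).deriv
  have h₂ : HasDerivAt (fun t : ℝ => fderiv ℝ f (x₀ + t • e) e)
      (fderiv ℝ (fun y => fderiv ℝ f y e) x₀ e) 0 :=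
    (hf.differentiableAt_fderiv_apply e).hasFDerivAt.comp_hasDerivAt_of_eq 0 (hℓ 0) (by simp)
  have hmin : IsLocalMin (fun s : ℝ => f (x₀ + s • e)) 0 := by
    simpa [IsLocalMin, IsMinFilter] using hℓ0.eventually h
  have hc : ContinuousAt (fun s : ℝ => f (x₀ + s • e)) 0 := by
    simpa [ContinuousAt, Function.comp_def] using hf.continuousAt.tendsto.comp hℓ0
  have := hmin.deriv_deriv_nonneg hc
  rwa [h₁.deriv_eq, h₂.deriv] at this

end SecondDerivative

theorem fderiv_fderiv_quadratic_apply {F : Type*} [NormedAddCommGroup F] [InnerProductSpace ℝ F]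
    (a b : ℝ) (c x e : F) :
    fderiv ℝ (fun y => fderiv ℝ (fun z => a - b * ‖z - c‖ ^ 2) y e) x e = -(2 * b * ‖e‖ ^ 2) := by
  have h₁ : (fun y => fderiv ℝ (fun z => a - b * ‖z - c‖ ^ 2) y e) =
      fun y => -(2 * b * ⟪y - c, e⟫) := by
    funext y
    have hq : HasFDerivAt (fun z => a - b * ‖z - c‖ ^ 2) _ y :=
      (((hasFDerivAt_id y).sub_const c).norm_sq.const_mul b).const_sub a
    rw [hq.fderiv]
    simp only [id_eq, map_sub, ContinuousLinearMap.comp_id, neg_apply, smul_apply, sub_apply,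
      coe_innerSL_apply, nsmul_eq_mul, Nat.cast_ofNat, smul_eq_mul, inner_sub_left, neg_inj]
    ring
  have h₂ : HasFDerivAt (fun y => -(2 * b * ⟪y - c, e⟫)) _ x :=
    (((hasFDerivAt_id x).sub_const c).inner ℝ (hasFDerivAt_const e x)).const_mul (2 * b) |>.neg
  rw [h₁, h₂.fderiv]
  simp

theorem abs_le_supNorm {α : Type*} {S : Set α} {y : α → ℝ} {B : ℝ} (hB : ∀ x ∈ S, |y x| ≤ B)
    {x : α} (hx : x ∈ S) : |y x| ≤ supNorm S y :=
  le_csSup ⟨B, by rintro _ ⟨t, ht, rfl⟩; exact hB t ht⟩ ⟨x, hx, rfl⟩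

theorem supNorm_nonneg {α : Type*} (S : Set α) (y : α → ℝ) : 0 ≤ supNorm S y :=
  Real.sSup_nonneg <| by rintro _ ⟨t, -, rfl⟩; exact abs_nonneg _

section Laplacian

variable {n : ℕ}

local notation "ℝⁿ" => EuclideanSpace ℝ (Fin n)

theorem IsLocalMin.lap_nonneg {v : ℝⁿ → ℝ} {x : ℝⁿ} (h : IsLocalMin v x)
    (hv : ContDiffAt ℝ 2 v x) : 0 ≤ lap v x :=
  Finset.sum_nonneg fun _ _ => h.fderiv_fderiv_apply_nonneg hv _

theorem lap_neg (f : ℝⁿ → ℝ) (x : ℝⁿ) : lap (-f) x = -lap f x := by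
  simp only [lap, fderiv_neg, neg_apply, fderiv_fun_neg, Finset.sum_neg_distrib]

theorem lap_sub {f g : ℝⁿ → ℝ} {x : ℝⁿ} (hf : ContDiffAt ℝ 2 f x) (hg : ContDiffAt ℝ 2 g x) :
    lap (f - g) x = lap f x - lap g x := by
  unfold lap
  rw [← Finset.sum_sub_distrib]
  refine Finset.sum_congr rfl fun i _ => ?_
  set e : ℝⁿ := EuclideanSpace.single i 1
  have hfg : (fun y => fderiv ℝ (f - g) y e) =ᶠ[𝓝 x]
      fun y => fderiv ℝ f y e - fderiv ℝ g y e := by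
    filter_upwards [hf.eventually (by simp), hg.eventually (by simp)] with y hfy hgy
    rw [fderiv_sub (hfy.differentiableAt (by simp)) (hgy.differentiableAt (by simp))]
    rfl
  rw [hfg.fderiv_eq, fderiv_fun_sub (hf.differentiableAt_fderiv_apply e)
    (hg.differentiableAt_fderiv_apply e)]
  rfl

theorem lap_quadratic (a b : ℝ) (c x : ℝⁿ) :
    lap (fun z => a - b * ‖z - c‖ ^ 2) x = -(2 * n * b) := by
  simp only [lap, fderiv_fderiv_quadratic_apply, PiLp.norm_single, norm_one, one_pow, mul_one,
    Finset.sum_neg_distrib, Finset.sum_const, Finset.card_univ, Fintype.card_fin, nsmul_eq_mul]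
  ring

theorem nonneg_of_lap_neg_of_frontier_nonneg {Ω : Set ℝⁿ} (hΩ : IsOpen Ω)
    (hcpt : IsCompact (closure Ω)) {v : ℝⁿ → ℝ} (hvc : ContinuousOn v (closure Ω))
    (hvd : ContDiffOn ℝ 2 v Ω) (hlap : ∀ x ∈ Ω, lap v x < 0)
    (hb : ∀ x ∈ frontier Ω, 0 ≤ v x) {x : ℝⁿ} (hx : x ∈ closure Ω) : 0 ≤ v x := by
  obtain ⟨x₀, hx₀, hmin⟩ := hcpt.exists_isMinOn ⟨x, hx⟩ hvc
  have hx₀Ω : x₀ ∉ Ω := fun h₀ => (hlap x₀ h₀).not_ge <|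
    (hmin.isLocalMin (mem_of_superset (hΩ.mem_nhds h₀) subset_closure)).lap_nonneg
      (hvd.contDiffAt (hΩ.mem_nhds h₀))
  have hx₀Γ : x₀ ∈ frontier Ω := ⟨hx₀, by rwa [hΩ.interior_eq]⟩
  exact (hb x₀ hx₀Γ).trans (hmin hx)

end Laplacian

section Poisson

variable {n : ℕ} {Ω : Set (EuclideanSpace ℝ (Fin n))} {w φ : EuclideanSpace ℝ (Fin n) → ℝ}
  {R : ℝ} {c : EuclideanSpace ℝ (Fin n)}

local notation "ℝⁿ" => EuclideanSpace ℝ (Fin n)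

theorem IsPoissonSol.neg (hw : IsPoissonSol Ω w φ) : IsPoissonSol Ω (-w) (-φ) := by
  obtain ⟨hwc, hwd, hlap, hb⟩ := hw
  refine ⟨hwc.neg, hwd.neg, fun x hx => ?_, fun x hx => ?_⟩
  · rw [lap_neg, hlap x hx]; rfl
  · simp [hb x hx]

theorem IsPoissonSol.sub (hΩ : IsOpen Ω) {w' φ' : ℝⁿ → ℝ} (hw : IsPoissonSol Ω w φ)
    (hw' : IsPoissonSol Ω w' φ') : IsPoissonSol Ω (w - w') (φ - φ') := by
  obtain ⟨hwc, hwd, hlap, hb⟩ := hw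
  obtain ⟨hwc', hwd', hlap', hb'⟩ := hw'
  refine ⟨hwc.sub hwc', hwd.sub hwd', fun x hx => ?_, fun x hx => ?_⟩
  · have hU := hΩ.mem_nhds hx
    rw [lap_sub (hwd.contDiffAt hU) (hwd'.contDiffAt hU), hlap x hx, hlap' x hx]; rfl
  · simp [hb x hx, hb' x hx]

/-- Comparison of `w` with the paraboloid `q = N (R² - ‖z - c‖²) / (2n)`: `Δ(q - w) < 0` in `Ω`
and `q - w = q ≥ 0` on `Γ`. -/
theorem IsPoissonSol.le_of_abs_lt (hn : 0 < n) (hΩ : IsOpen Ω)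
    (hball : Ω ⊆ Metric.closedBall c R) (hw : IsPoissonSol Ω w φ) {N : ℝ}
    (hφ : ∀ x ∈ Ω, |φ x| < N) {x : ℝⁿ} (hx : x ∈ closure Ω) :
    w x ≤ R ^ 2 / (2 * n) * N := by
  obtain ⟨hwc, hwd, hlap, hb⟩ := hw
  have hcl : closure Ω ⊆ Metric.closedBall c R := closure_minimal hball Metric.isClosed_closedBall
  have hN : 0 ≤ N := by
    obtain ⟨y, hy⟩ := closure_nonempty_iff.mp ⟨x, hx⟩
    exact (abs_nonneg _).trans (hφ y hy).le
  set b := N / (2 * n)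
  set q : ℝⁿ → ℝ := fun z => R ^ 2 * b - b * ‖z - c‖ ^ 2
  have hq : ContDiff ℝ 2 q :=
    contDiff_const.sub (contDiff_const.mul ((contDiff_id.sub contDiff_const).norm_sq ℝ))
  have hq_nonneg : ∀ y ∈ closure Ω, 0 ≤ q y := fun y hy => by
    have : ‖y - c‖ ≤ R := by simpa [dist_eq_norm] using hcl hy
    have : ‖y - c‖ ^ 2 ≤ R ^ 2 := pow_le_pow_left₀ (norm_nonneg _) this 2
    have : 0 ≤ b := by positivity
    simp only [q]; nlinarith
  have hlapq : ∀ y, lap q y = -N := fun y => by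
    simp only [q, lap_quadratic, b]
    field_simp
  have hv := nonneg_of_lap_neg_of_frontier_nonneg hΩ
    ((isCompact_closedBall c R).of_isClosed_subset isClosed_closure hcl)
    (hq.continuous.continuousOn.sub hwc) (hq.contDiffOn.sub hwd) (fun y hy => ?_)
    (fun y hy => by simpa [hb y hy] using hq_nonneg y hy.1) hx
  · have : q x ≤ R ^ 2 / (2 * n) * N := calc
      q x ≤ R ^ 2 * b := sub_le_self _ (by positivity)
      _ = R ^ 2 / (2 * n) * N := by ring
    simp only [Pi.sub_apply] at hv
    linarith
  · rw [lap_sub hq.contDiffAt (hwd.contDiffAt (hΩ.mem_nhds hy)), hlap y hy, hlapq]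
    linarith [neg_abs_le (φ y), hφ y hy]

theorem IsPoissonSol.abs_le (hn : 0 < n) (hΩ : IsOpen Ω) (hball : Ω ⊆ Metric.closedBall c R)
    (hw : IsPoissonSol Ω w φ) {N : ℝ} (hφ : ∀ x ∈ Ω, |φ x| ≤ N) {x : ℝⁿ}
    (hx : x ∈ closure Ω) : |w x| ≤ R ^ 2 / (2 * n) * N := by
  have hlt : ∀ N' > N, |w x| ≤ R ^ 2 / (2 * n) * N' := fun N' hN' => by
    have hφ' : ∀ y ∈ Ω, |φ y| < N' := fun y hy => (hφ y hy).trans_lt hN'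
    have hneg := hw.neg.le_of_abs_lt hn hΩ hball (by simpa using hφ') hx
    exact _root_.abs_le.mpr ⟨by simp only [Pi.neg_apply] at hneg; linarith, hw.le_of_abs_lt hn hΩ hball hφ' hx⟩
  have hcont : Tendsto (fun N' => R ^ 2 / (2 * n) * N') (𝓝[>] N) (𝓝 (R ^ 2 / (2 * n) * N)) :=
    ((continuous_const_mul _).tendsto N).mono_left nhdsWithin_le_nhds
  exact ge_of_tendsto hcont (eventually_nhdsWithin_of_forall hlt)

theorem IsPoissonSol.abs_le_of_chain (hn : 0 < n) (hΩ : IsOpen Ω)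
    (hball : Ω ⊆ Metric.closedBall c R) {w₀ w₁ : ℝⁿ → ℝ} (h₀ : IsPoissonSol Ω w₀ w₁)
    (h₁ : IsPoissonSol Ω w₁ w) (h₂ : IsPoissonSol Ω w φ) {K : ℝ} (hφ : ∀ x ∈ Ω, |φ x| ≤ K)
    {x : ℝⁿ} (hx : x ∈ closure Ω) :
    |w₀ x| ≤ (R ^ 2 / (2 * n)) ^ 3 * K ∧ |w₁ x| ≤ (R ^ 2 / (2 * n)) ^ 2 * K ∧
      |w x| ≤ R ^ 2 / (2 * n) * K := by
  have b₂ : ∀ y ∈ closure Ω, |w y| ≤ R ^ 2 / (2 * n) * K := fun y hy =>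
    h₂.abs_le hn hΩ hball hφ hy
  have b₁ : ∀ y ∈ closure Ω, |w₁ y| ≤ R ^ 2 / (2 * n) * (R ^ 2 / (2 * n) * K) := fun y hy =>
    h₁.abs_le hn hΩ hball (fun z hz => b₂ z (subset_closure hz)) hy
  have b₀ := h₀.abs_le hn hΩ hball (fun z hz => b₁ z (subset_closure hz)) hx
  exact ⟨b₀.trans_eq (by ring), (b₁ x hx).trans_eq (by ring), b₂ x hx⟩

end Poisson

section Triharmonic

variable {n : ℕ} {Ω : Set (EuclideanSpace ℝ (Fin n))} {u φ : EuclideanSpace ℝ (Fin n) → ℝ}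
  {R : ℝ} {c : EuclideanSpace ℝ (Fin n)}

local notation "ℝⁿ" => EuclideanSpace ℝ (Fin n)

theorem IsClassicalTriharm.isPoissonSol (hu : IsClassicalTriharm Ω u φ) :
    IsPoissonSol Ω u (lap u) ∧ IsPoissonSol Ω (lap u) (lap (lap u)) ∧
      IsPoissonSol Ω (lap (lap u)) φ := by
  obtain ⟨hc₀, hc₁, hc₂, hd₀, hd₁, hd₂, hφ, hb⟩ := hu
  exact ⟨⟨hc₀, hd₀, fun _ _ => rfl, fun x hx => (hb x hx).1⟩,
    ⟨hc₁, hd₁, fun _ _ => rfl, fun x hx => (hb x hx).2.1⟩,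
    ⟨hc₂, hd₂, hφ, fun x hx => (hb x hx).2.2⟩⟩

theorem IsClassicalTriharm.abs_le (hn : 0 < n) (hΩ : IsOpen Ω)
    (hball : Ω ⊆ Metric.closedBall c R) (hu : IsClassicalTriharm Ω u φ) {K : ℝ}
    (hφ : ∀ x ∈ Ω, |φ x| ≤ K) {x : ℝⁿ} (hx : x ∈ closure Ω) :
    |u x| ≤ (R ^ 2 / (2 * n)) ^ 3 * K ∧ |lap u x| ≤ (R ^ 2 / (2 * n)) ^ 2 * K ∧
      |lap (lap u) x| ≤ R ^ 2 / (2 * n) * K :=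
  let ⟨h₀, h₁, h₂⟩ := hu.isPoissonSol
  IsPoissonSol.abs_le_of_chain hn hΩ hball h₀ h₁ h₂ hφ hx

theorem IsClassicalTriharm.abs_sub_le (hn : 0 < n) (hΩ : IsOpen Ω)
    (hball : Ω ⊆ Metric.closedBall c R) {u' φ' : ℝⁿ → ℝ} (hu : IsClassicalTriharm Ω u φ)
    (hu' : IsClassicalTriharm Ω u' φ') {K : ℝ} (hφ : ∀ x ∈ Ω, |φ x - φ' x| ≤ K) {x : ℝⁿ}
    (hx : x ∈ closure Ω) :
    |u x - u' x| ≤ (R ^ 2 / (2 * n)) ^ 3 * K ∧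
      |lap u x - lap u' x| ≤ (R ^ 2 / (2 * n)) ^ 2 * K ∧
      |lap (lap u) x - lap (lap u') x| ≤ R ^ 2 / (2 * n) * K :=
  let ⟨h₀, h₁, h₂⟩ := hu.isPoissonSol
  let ⟨h₀', h₁', h₂'⟩ := hu'.isPoissonSol
  IsPoissonSol.abs_le_of_chain hn hΩ hball (h₀.sub hΩ h₀') (h₁.sub hΩ h₁') (h₂.sub hΩ h₂') hφ hx

end Triharmonic

theorem statement6_general {n : ℕ} (hn : 2 ≤ n)
    (Ω : Set (EuclideanSpace ℝ (Fin n))) (hΩopen : IsOpen Ω)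
    (R : ℝ) (c : EuclideanSpace ℝ (Fin n)) (hball : Ω ⊆ Metric.closedBall c R)
    (CΩ : ℝ) (hCΩ : CΩ = R ^ 2 / (2 * n))
    (f : EuclideanSpace ℝ (Fin n) → ℝ → ℝ → ℝ → ℝ)
    (M L1 L2 L3 : ℝ) (hL1 : 0 ≤ L1) (hL2 : 0 ≤ L2) (hL3 : 0 ≤ L3)
    -- Lipschitz condition on `D_M`
    (hlip : ∀ x ∈ Ω, ∀ u₁ v₁ w₁ u₂ v₂ w₂ : ℝ,
      |u₁| ≤ CΩ ^ 3 * M → |v₁| ≤ CΩ ^ 2 * M → |w₁| ≤ CΩ * M →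
      |u₂| ≤ CΩ ^ 3 * M → |v₂| ≤ CΩ ^ 2 * M → |w₂| ≤ CΩ * M →
      |f x u₂ v₂ w₂ - f x u₁ v₁ w₁| ≤ L1 * |u₂ - u₁| + L2 * |v₂ - v₁| + L3 * |w₂ - w₁|)
    (φ₁ φ₂ u₁ u₂ : EuclideanSpace ℝ (Fin n) → ℝ)
    (hφ₁M : ∀ x ∈ closure Ω, |φ₁ x| ≤ M) (hφ₂M : ∀ x ∈ closure Ω, |φ₂ x| ≤ M)
    (hu₁ : IsClassicalTriharm Ω u₁ φ₁) (hu₂ : IsClassicalTriharm Ω u₂ φ₂) :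
    ∀ x ∈ closure Ω,
      |f x (u₂ x) (lap u₂ x) (lap (lap u₂) x) - f x (u₁ x) (lap u₁ x) (lap (lap u₁) x)|
        ≤ ((CΩ ^ 2 * L1 + CΩ * L2 + L3) * CΩ) *
          supNorm (closure Ω) (fun t => φ₂ t - φ₁ t) := by
  intro x hx
  subst hCΩ
  have hn₀ : 0 < n := by omega
  set N := supNorm (closure Ω) (fun t => φ₂ t - φ₁ t)
  have hN : ∀ y ∈ Ω, |φ₂ y - φ₁ y| ≤ N := fun y hy =>
    abs_le_supNorm (fun z hz => (abs_sub _ _).trans (add_le_add (hφ₂M z hz) (hφ₁M z hz)))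
      (subset_closure hy)
  rw [closure_eq_interior_union_frontier, hΩopen.interior_eq] at hx
  rcases hx with hxΩ | hxΓ
  · have hx := subset_closure hxΩ
    obtain ⟨a₀, a₁, a₂⟩ := hu₁.abs_le hn₀ hΩopen hball (fun y hy => hφ₁M y (subset_closure hy)) hx
    obtain ⟨b₀, b₁, b₂⟩ := hu₂.abs_le hn₀ hΩopen hball (fun y hy => hφ₂M y (subset_closure hy)) hx
    obtain ⟨d₀, d₁, d₂⟩ := hu₂.abs_sub_le hn₀ hΩopen hball hu₁ hN hx
    calc _ ≤ L1 * |u₂ x - u₁ x| + L2 * |lap u₂ x - lap u₁ x|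
          + L3 * |lap (lap u₂) x - lap (lap u₁) x| := hlip x hxΩ _ _ _ _ _ _ a₀ a₁ a₂ b₀ b₁ b₂
      _ ≤ L1 * ((R ^ 2 / (2 * n)) ^ 3 * N) + L2 * ((R ^ 2 / (2 * n)) ^ 2 * N)
          + L3 * (R ^ 2 / (2 * n) * N) := by gcongr
      _ = _ := by ring
  · obtain ⟨-, -, -, -, -, -, -, hΓ₁⟩ := hu₁
    obtain ⟨-, -, -, -, -, -, -, hΓ₂⟩ := hu₂
    obtain ⟨h₁, h₁', h₁''⟩ := hΓ₁ x hxΓ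
    obtain ⟨h₂, h₂', h₂''⟩ := hΓ₂ x hxΓ
    rw [h₁, h₁', h₁'', h₂, h₂', h₂'', sub_self, abs_zero]
    exact mul_nonneg (by positivity) (supNorm_nonneg _ _)

/-- contraction property of the operator `A`: if `f` is
`(L₁,L₂,L₃)`-Lipschitz on `D_M`, `‖φ₁‖, ‖φ₂‖ ≤ M` and `uᵢ` are the classical solutions of
`Δ³uᵢ = φᵢ` with homogeneous boundary conditions, then
`max_{x∈Ω̄} |f(x,u₂,Δu₂,Δ²u₂) − f(x,u₁,Δu₁,Δ²u₁)| ≤ q·‖φ₂ − φ₁‖` with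
`q = (C_Ω²L₁ + C_ΩL₂ + L₃)·C_Ω`. -/
theorem statement6 {n : ℕ} (hn : 2 ≤ n)
    (Ω : Set (EuclideanSpace ℝ (Fin n))) (hΩopen : IsOpen Ω) (hΩconn : IsConnected Ω)
    (R : ℝ) (c : EuclideanSpace ℝ (Fin n)) (hball : Ω ⊆ Metric.closedBall c R)
    (CΩ : ℝ) (hCΩ : CΩ = R ^ 2 / (2 * n))
    (f : EuclideanSpace ℝ (Fin n) → ℝ → ℝ → ℝ → ℝ)
    (hf : ContinuousOn (fun p : EuclideanSpace ℝ (Fin n) × ℝ × ℝ × ℝ =>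
      f p.1 p.2.1 p.2.2.1 p.2.2.2)
      ((closure Ω) ×ˢ (Set.univ : Set (ℝ × ℝ × ℝ))))
    (M L1 L2 L3 : ℝ) (hM : 0 < M) (hL1 : 0 ≤ L1) (hL2 : 0 ≤ L2) (hL3 : 0 ≤ L3)
    -- Lipschitz condition on `D_M`
    (hlip : ∀ x ∈ Ω, ∀ u₁ v₁ w₁ u₂ v₂ w₂ : ℝ,
      |u₁| ≤ CΩ ^ 3 * M → |v₁| ≤ CΩ ^ 2 * M → |w₁| ≤ CΩ * M →
      |u₂| ≤ CΩ ^ 3 * M → |v₂| ≤ CΩ ^ 2 * M → |w₂| ≤ CΩ * M →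
      |f x u₂ v₂ w₂ - f x u₁ v₁ w₁| ≤ L1 * |u₂ - u₁| + L2 * |v₂ - v₁| + L3 * |w₂ - w₁|)
    (φ₁ φ₂ u₁ u₂ : EuclideanSpace ℝ (Fin n) → ℝ)
    (hφ₁ : ContinuousOn φ₁ (closure Ω)) (hφ₂ : ContinuousOn φ₂ (closure Ω))
    (hφ₁M : ∀ x ∈ closure Ω, |φ₁ x| ≤ M) (hφ₂M : ∀ x ∈ closure Ω, |φ₂ x| ≤ M)
    (hu₁ : IsClassicalTriharm Ω u₁ φ₁) (hu₂ : IsClassicalTriharm Ω u₂ φ₂) :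
    ∀ x ∈ closure Ω,
      |f x (u₂ x) (lap u₂ x) (lap (lap u₂) x) - f x (u₁ x) (lap u₁ x) (lap (lap u₁) x)|
        ≤ ((CΩ ^ 2 * L1 + CΩ * L2 + L3) * CΩ) *
          supNorm (closure Ω) (fun t => φ₂ t - φ₁ t) :=
  statement6_general hn Ω hΩopen R c hball CΩ hCΩ f M L1 L2 L3 hL1 hL2 hL3 hlip φ₁ φ₂ u₁ u₂ hφ₁M
    hφ₂M hu₁ hu₂
end

section
/- Assume |f(x,u,v,w)| ≤ M for all (x,u,v,w) ∈ D_M. Let φ ∈ C(Ω̄) with ‖φ‖ ≤ M, and let u be a function with u, Δu, Δ²u continuous on Ω̄ satisfying Δ³u = φ in Ω and u = Δu = Δ²u = 0 on Γ. Then ‖u‖ ≤ C_Ω³M, ‖Δu‖ ≤ C_Ω²M, ‖Δ²u‖ ≤ C_ΩM, and consequently max_{x∈Ω̄}|f(x, u(x), Δu(x), Δ²u(x))| ≤ M (so the operator φ ↦ f(·, u, Δu, Δ²u) maps the ball B[O,M] = {φ ∈ C(Ω̄) : ‖φ‖ ≤ M} into itself). -/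
/-!
Each of `Δ²u`, `Δu`, `u` solves a Poisson problem `Δw = g` with zero boundary values, so it
suffices to show `|w| ≤ C_Ω ‖g‖`. For `K = ‖g‖`, the functions `±w + K/(2n) |x - c|²` are
subharmonic and at most `C_Ω K` on `Γ`, so the weak maximum principle bounds them on `Ω̄`. The weak
maximum principle reduces, via a perturbation `ε |x - c|²`, to the strict one, where an interior
maximum would contradict `Δv > 0` by the one-dimensional second-derivative test. The bound on `f`
then holds on `Ω` by hypothesis and passes to `Ω̄` by continuity.
-/

open scoped BigOperators

open InnerProductSpace Laplacian Topology

section Lap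

variable {n : ℕ} {f : EuclideanSpace ℝ (Fin n) → ℝ} {x : EuclideanSpace ℝ (Fin n)}

lemma lap_eq_laplacian (hf : ContDiffAt ℝ 2 f x) : lap f x = Δ f x := by
  rw [laplacian_eq_iteratedFDeriv_orthonormalBasis f (EuclideanSpace.basisFun (Fin n) ℝ)]
  refine Finset.sum_congr rfl fun i _ => ?_
  have hdf : DifferentiableAt ℝ (fderiv ℝ f) x :=
    (hf.fderiv_right le_rfl).differentiableAt one_ne_zero
  rw [iteratedFDeriv_two_apply, fderiv_clm_apply hdf (differentiableAt_const _)]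
  simp

lemma lap_mul_norm_sub_sq (a : ℝ) (c x : EuclideanSpace ℝ (Fin n)) :
    lap (fun y => a * ‖y - c‖ ^ 2) x = 2 * n * a := by
  have hfirst : ∀ e, (fun y => fderiv ℝ (fun z => a * ‖z - c‖ ^ 2) y e) =
      fun y => 2 * a * inner ℝ (y - c) e := by
    intro e
    ext y
    rw [((hasFDerivAt_sub_const (x := y) c).norm_sq.const_mul a).fderiv]
    simp [inner_sub_left]
    ring
  have hsecond : ∀ e, fderiv ℝ (fun y => 2 * a * inner ℝ (y - c) e) x e = 2 * a * ‖e‖ ^ 2 := by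
    intro e
    have hlin := ((hasFDerivAt_sub_const (x := x) c).inner ℝ (hasFDerivAt_const e x)).const_mul
      (2 * a)
    rw [hlin.fderiv]
    simp
  simp [lap, hfirst, hsecond]
  ring

end Lap

-- Otherwise the second-derivative test makes `t` also a local minimum, so `g` is locally constant.
lemma IsLocalMax.deriv_deriv_nonpos {g : ℝ → ℝ} {t : ℝ} (h : IsLocalMax g t)
    (hc : ContinuousAt g t) : deriv (deriv g) t ≤ 0 := by
  by_contra! hpos
  have hmin : IsLocalMin g t := isLocalMin_of_deriv_deriv_pos hpos h.deriv_eq_zero hc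
  have hconst : g =ᶠ[𝓝 t] fun _ => g t :=
    (h.and hmin).mono fun s hs => le_antisymm hs.1 hs.2
  have hderiv : deriv g =ᶠ[𝓝 t] fun _ => 0 :=
    hconst.eventually_nhds.mono fun s hs => by rw [Filter.EventuallyEq.deriv_eq hs, deriv_const]
  rw [hderiv.deriv_eq, deriv_const] at hpos
  exact hpos.false

lemma IsLocalMax.fderiv_fderiv_apply_self_nonpos {E : Type*} [NormedAddCommGroup E]
    [NormedSpace ℝ E] {v : E → ℝ} {z : E} (h : IsLocalMax v z) (hv : ContDiffAt ℝ 2 v z)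
    (e : E) : fderiv ℝ (fun y => fderiv ℝ v y e) z e ≤ 0 := by
  set L : ℝ → E := fun t => z + t • e
  have hL0 : L 0 = z := by simp [L]
  have hL : ∀ t, HasDerivAt L e t := fun t => by
    simpa [L] using ((hasDerivAt_id t).smul_const e).const_add z
  have hmax : IsLocalMax (v ∘ L) 0 := by
    rw [← hL0] at h
    exact h.comp_continuous (hL 0).continuousAt
  have hdiff : ∀ᶠ t in 𝓝 0, DifferentiableAt ℝ v (L t) := by
    rw [← hL0] at hv
    exact (hL 0).continuousAt.eventually ((hv.eventually (by simp)).mono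
      fun y hy => hy.differentiableAt two_ne_zero)
  have hderiv : deriv (v ∘ L) =ᶠ[𝓝 0] fun t => fderiv ℝ v (L t) e :=
    hdiff.mono fun t ht => (ht.hasFDerivAt.comp_hasDerivAt t (hL t)).deriv
  have hdir : DifferentiableAt ℝ (fun y => fderiv ℝ v y e) z :=
    ((hv.fderiv_right le_rfl).differentiableAt one_ne_zero).clm_apply
      (differentiableAt_const e)
  have hsecond : deriv (deriv (v ∘ L)) 0 = fderiv ℝ (fun y => fderiv ℝ v y e) z e := by
    rw [hderiv.deriv_eq]
    exact (hdir.hasFDerivAt.comp_hasDerivAt_of_eq 0 (hL 0) hL0.symm).deriv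
  exact hsecond ▸ hmax.deriv_deriv_nonpos
    (hv.continuousAt.comp_of_eq (hL 0).continuousAt hL0)

section MaximumPrinciple

variable {n : ℕ} {Ω : Set (EuclideanSpace ℝ (Fin n))} {v : EuclideanSpace ℝ (Fin n) → ℝ}
  {x : EuclideanSpace ℝ (Fin n)}

lemma IsLocalMax.lap_nonpos {z : EuclideanSpace ℝ (Fin n)} (h : IsLocalMax v z)
    (hv : ContDiffAt ℝ 2 v z) : lap v z ≤ 0 :=
  Finset.sum_nonpos fun _ _ => h.fderiv_fderiv_apply_self_nonpos hv _

lemma contDiff_mul_norm_sub_sq (a : ℝ) (c : EuclideanSpace ℝ (Fin n)) :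
    ContDiff ℝ 2 (fun y : EuclideanSpace ℝ (Fin n) => a * ‖y - c‖ ^ 2) :=
  contDiff_const.mul ((contDiff_norm_sq ℝ).comp (contDiff_id.sub contDiff_const))

lemma lap_add_mul_norm_sub_sq (hv : ContDiffAt ℝ 2 v x) (a : ℝ) (c : EuclideanSpace ℝ (Fin n)) :
    lap (v + fun y => a * ‖y - c‖ ^ 2) x = lap v x + 2 * n * a := by
  have hq := (contDiff_mul_norm_sub_sq a c).contDiffAt (x := x)
  have hsum : ContDiffAt ℝ 2 (v + fun y => a * ‖y - c‖ ^ 2) x := hv.add hq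
  rw [lap_eq_laplacian hsum, hv.laplacian_add hq,
    ← lap_eq_laplacian hv, ← lap_eq_laplacian hq, lap_mul_norm_sub_sq]

lemma le_of_lap_pos (hΩ : IsOpen Ω) (hcomp : IsCompact (closure Ω))
    (hvc : ContinuousOn v (closure Ω)) (hv : ContDiffOn ℝ 2 v Ω)
    (hlap : ∀ y ∈ Ω, 0 < lap v y) {B : ℝ} (hB : ∀ y ∈ frontier Ω, v y ≤ B)
    (hx : x ∈ closure Ω) : v x ≤ B := by
  obtain ⟨z, hz, hmax⟩ := hcomp.exists_isMaxOn ⟨x, hx⟩ hvc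
  have hzΩ : z ∉ Ω := fun hzΩ =>
    ((hmax.on_subset subset_closure).isLocalMax (hΩ.mem_nhds hzΩ)).lap_nonpos
      (hv.contDiffAt (hΩ.mem_nhds hzΩ)) |>.not_gt (hlap z hzΩ)
  exact (hmax hx).trans (hB z ⟨hz, by rwa [hΩ.interior_eq]⟩)

variable [NeZero n] {c : EuclideanSpace ℝ (Fin n)} {R : ℝ}

lemma le_of_lap_nonneg (hΩ : IsOpen Ω) (hball : Ω ⊆ Metric.closedBall c R)
    (hvc : ContinuousOn v (closure Ω)) (hv : ContDiffOn ℝ 2 v Ω)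
    (hlap : ∀ y ∈ Ω, 0 ≤ lap v y) {B : ℝ} (hB : ∀ y ∈ frontier Ω, v y ≤ B)
    (hx : x ∈ closure Ω) : v x ≤ B := by
  have hcl : closure Ω ⊆ Metric.closedBall c R :=
    closure_minimal hball Metric.isClosed_closedBall
  have hcomp : IsCompact (closure Ω) :=
    (isCompact_closedBall c R).of_isClosed_subset isClosed_closure hcl
  have hperturbed : ∀ ε > 0, v x ≤ B + ε * R ^ 2 := by
    intro ε hε
    have hq := contDiff_mul_norm_sub_sq ε c
    have hle := le_of_lap_pos (v := v + fun y => ε * ‖y - c‖ ^ 2) (B := B + ε * R ^ 2) hΩ hcomp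
      (hvc.add hq.continuous.continuousOn) (hv.add hq.contDiffOn)
      (fun y hy => by
        rw [lap_add_mul_norm_sub_sq (hv.contDiffAt (hΩ.mem_nhds hy))]
        have : (0 : ℝ) < n := Nat.cast_pos.mpr (NeZero.pos n)
        nlinarith [hlap y hy])
      (fun y hy => by
        have hyR : ‖y - c‖ ≤ R := mem_closedBall_iff_norm.mp (hcl (frontier_subset_closure hy))
        exact add_le_add (hB y hy) (by gcongr : ε * ‖y - c‖ ^ 2 ≤ ε * R ^ 2)) hx
    simp only [Pi.add_apply] at hle
    nlinarith [sq_nonneg ‖x - c‖]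
  refine le_of_forall_pos_le_add fun δ hδ => ?_
  calc v x ≤ B + δ / (R ^ 2 + 1) * R ^ 2 := hperturbed _ (by positivity)
    _ ≤ B + δ := by
      gcongr
      rw [div_mul_eq_mul_div, div_le_iff₀ (by positivity)]
      nlinarith

end MaximumPrinciple

section Poisson

variable {n : ℕ} [NeZero n] {Ω : Set (EuclideanSpace ℝ (Fin n))} {c : EuclideanSpace ℝ (Fin n)}
  {R K : ℝ} {w : EuclideanSpace ℝ (Fin n) → ℝ} {x : EuclideanSpace ℝ (Fin n)}

lemma le_of_neg_le_lap (hΩ : IsOpen Ω) (hball : Ω ⊆ Metric.closedBall c R) (hK : 0 ≤ K)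
    (hwc : ContinuousOn w (closure Ω)) (hw : ContDiffOn ℝ 2 w Ω)
    (hlap : ∀ y ∈ Ω, -K ≤ lap w y) (hbdry : ∀ y ∈ frontier Ω, w y ≤ 0)
    (hx : x ∈ closure Ω) : w x ≤ R ^ 2 / (2 * n) * K := by
  have hn : (0 : ℝ) < 2 * n := by have := NeZero.pos n; positivity
  set a := K / (2 * n)
  have hq := contDiff_mul_norm_sub_sq a c
  have hle := le_of_lap_nonneg (v := w + fun y => a * ‖y - c‖ ^ 2) (B := a * R ^ 2) hΩ hball
    (hwc.add hq.continuous.continuousOn) (hw.add hq.contDiffOn)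
    (fun y hy => by
      rw [lap_add_mul_norm_sub_sq (hw.contDiffAt (hΩ.mem_nhds hy)), mul_div_cancel₀ K hn.ne']
      linarith [hlap y hy])
    (fun y hy => by
      have hyR : ‖y - c‖ ≤ R :=
        mem_closedBall_iff_norm.mp (closure_minimal hball Metric.isClosed_closedBall
          (frontier_subset_closure hy))
      simpa using add_le_add (hbdry y hy) (by gcongr : a * ‖y - c‖ ^ 2 ≤ a * R ^ 2))
    hx
  simp only [Pi.add_apply] at hle
  have : 0 ≤ a * ‖x - c‖ ^ 2 := by positivity
  calc w x ≤ a * R ^ 2 := by linarith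
    _ = R ^ 2 / (2 * n) * K := by ring

lemma abs_le_of_abs_lap_le (hΩ : IsOpen Ω) (hball : Ω ⊆ Metric.closedBall c R) (hK : 0 ≤ K)
    (hwc : ContinuousOn w (closure Ω)) (hw : ContDiffOn ℝ 2 w Ω)
    (hlap : ∀ y ∈ Ω, |lap w y| ≤ K) (hbdry : ∀ y ∈ frontier Ω, w y = 0)
    (hx : x ∈ closure Ω) : |w x| ≤ R ^ 2 / (2 * n) * K := by
  have hlap_neg : ∀ y ∈ Ω, lap (-w) y = -lap w y := fun y hy => by
    have hwy := hw.contDiffAt (hΩ.mem_nhds hy)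
    rw [lap_eq_laplacian (f := -w) hwy.neg, laplacian_neg, Pi.neg_apply, lap_eq_laplacian hwy]
  have hupper := le_of_neg_le_lap hΩ hball hK hwc hw
    (fun y hy => (abs_le.mp (hlap y hy)).1) (fun y hy => (hbdry y hy).le) hx
  have hlower := le_of_neg_le_lap (w := -w) hΩ hball hK hwc.neg hw.neg
    (fun y hy => by rw [hlap_neg y hy, neg_le_neg_iff]; exact (abs_le.mp (hlap y hy)).2)
    (fun y hy => by simp [hbdry y hy]) hx
  rw [Pi.neg_apply] at hlower
  exact abs_le.mpr ⟨by linarith, hupper⟩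

end Poisson

theorem statement7_general {n : ℕ} (hn : 2 ≤ n)
    (Ω : Set (EuclideanSpace ℝ (Fin n))) (hΩopen : IsOpen Ω)
    (R : ℝ) (c : EuclideanSpace ℝ (Fin n)) (hball : Ω ⊆ Metric.closedBall c R)
    (CΩ : ℝ) (hCΩ : CΩ = R ^ 2 / (2 * n))
    (f : EuclideanSpace ℝ (Fin n) → ℝ → ℝ → ℝ → ℝ)
    (hf : ContinuousOn (fun p : EuclideanSpace ℝ (Fin n) × ℝ × ℝ × ℝ =>
      f p.1 p.2.1 p.2.2.1 p.2.2.2)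
      ((closure Ω) ×ˢ (Set.univ : Set (ℝ × ℝ × ℝ))))
    (M : ℝ) (hM : 0 < M)
    -- boundedness of `f` on `D_M`
    (hbound : ∀ x ∈ Ω, ∀ u v w : ℝ,
      |u| ≤ CΩ ^ 3 * M → |v| ≤ CΩ ^ 2 * M → |w| ≤ CΩ * M → |f x u v w| ≤ M)
    (φ u : EuclideanSpace ℝ (Fin n) → ℝ)
    (hφM : ∀ x ∈ closure Ω, |φ x| ≤ M)
    (hu : IsClassicalTriharm Ω u φ) :
    (∀ x ∈ closure Ω,
      |u x| ≤ CΩ ^ 3 * M ∧ |lap u x| ≤ CΩ ^ 2 * M ∧ |lap (lap u) x| ≤ CΩ * M) ∧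
    (∀ x ∈ closure Ω, |f x (u x) (lap u x) (lap (lap u) x)| ≤ M) := by
  obtain ⟨huc, hluc, hlluc, hu2, hlu2, hllu2, heq, hbdry⟩ := hu
  have : NeZero n := ⟨by omega⟩
  have hCΩ0 : 0 ≤ CΩ := hCΩ ▸ by positivity
  have h3 : ∀ x ∈ closure Ω, |lap (lap u) x| ≤ CΩ * M := fun x hx => hCΩ ▸
    abs_le_of_abs_lap_le hΩopen hball hM.le hlluc hllu2
      (fun y hy => heq y hy ▸ hφM y (subset_closure hy)) (fun y hy => (hbdry y hy).2.2) hx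
  have h2 : ∀ x ∈ closure Ω, |lap u x| ≤ CΩ ^ 2 * M := fun x hx => by
    have := abs_le_of_abs_lap_le hΩopen hball (by positivity) hluc hlu2
      (fun y hy => h3 y (subset_closure hy)) (fun y hy => (hbdry y hy).2.1) hx
    rwa [← hCΩ, ← mul_assoc, ← sq] at this
  have h1 : ∀ x ∈ closure Ω, |u x| ≤ CΩ ^ 3 * M := fun x hx => by
    have := abs_le_of_abs_lap_le hΩopen hball (by positivity) huc hu2
      (fun y hy => h2 y (subset_closure hy)) (fun y hy => (hbdry y hy).1) hx
    rwa [← hCΩ, ← mul_assoc, ← pow_succ'] at this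
  refine ⟨fun x hx => ⟨h1 x hx, h2 x hx, h3 x hx⟩, fun x hx => ?_⟩
  have hcont : ContinuousOn (fun y => |f y (u y) (lap u y) (lap (lap u) y)|) (closure Ω) :=
    (hf.comp (continuousOn_id.prodMk (huc.prodMk (hluc.prodMk hlluc)))
      fun y hy => ⟨hy, trivial⟩).abs
  exact ((hcont x hx).mono subset_closure).closure_le hx continuousWithinAt_const
    fun y hy => hbound y hy _ _ _ (h1 y (subset_closure hy)) (h2 y (subset_closure hy))
      (h3 y (subset_closure hy))

/-- the operator `A` maps the ball `B[O,M]` into itself: if `|f| ≤ M` on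
`D_M`, `‖φ‖ ≤ M` and `u` is the classical solution of `Δ³u = φ` with homogeneous
boundary conditions, then `‖u‖ ≤ C_Ω³M`, `‖Δu‖ ≤ C_Ω²M`, `‖Δ²u‖ ≤ C_ΩM` and
`max_{x∈Ω̄} |f(x, u, Δu, Δ²u)| ≤ M`. -/
theorem statement7 {n : ℕ} (hn : 2 ≤ n)
    (Ω : Set (EuclideanSpace ℝ (Fin n))) (hΩopen : IsOpen Ω) (hΩconn : IsConnected Ω)
    (R : ℝ) (c : EuclideanSpace ℝ (Fin n)) (hball : Ω ⊆ Metric.closedBall c R)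
    (CΩ : ℝ) (hCΩ : CΩ = R ^ 2 / (2 * n))
    (f : EuclideanSpace ℝ (Fin n) → ℝ → ℝ → ℝ → ℝ)
    (hf : ContinuousOn (fun p : EuclideanSpace ℝ (Fin n) × ℝ × ℝ × ℝ =>
      f p.1 p.2.1 p.2.2.1 p.2.2.2)
      ((closure Ω) ×ˢ (Set.univ : Set (ℝ × ℝ × ℝ))))
    (M : ℝ) (hM : 0 < M)
    -- boundedness of `f` on `D_M`
    (hbound : ∀ x ∈ Ω, ∀ u v w : ℝ,
      |u| ≤ CΩ ^ 3 * M → |v| ≤ CΩ ^ 2 * M → |w| ≤ CΩ * M → |f x u v w| ≤ M)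
    (φ u : EuclideanSpace ℝ (Fin n) → ℝ)
    (hφ : ContinuousOn φ (closure Ω)) (hφM : ∀ x ∈ closure Ω, |φ x| ≤ M)
    (hu : IsClassicalTriharm Ω u φ) :
    (∀ x ∈ closure Ω,
      |u x| ≤ CΩ ^ 3 * M ∧ |lap u x| ≤ CΩ ^ 2 * M ∧ |lap (lap u) x| ≤ CΩ * M) ∧
    (∀ x ∈ closure Ω, |f x (u x) (lap u x) (lap (lap u) x)| ≤ M) :=
  statement7_general hn Ω hΩopen R c hball CΩ hCΩ f hf M hM hbound φ u hφM hu
end
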